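/- Let κ > 0. If there exists an odd zero-up ground state for parameter κ, then κ < 1. -/

import Mathlib

open Real MeasureTheory Set

noncomputable section

/-- An odd zero-up ground state for parameter `κ`: a `2π`-periodic, odd, twice
continuously differentiable function `U : ℝ → ℝ` satisfying
`κ² U'' + U − U³ = 0` on `ℝ`, with `U' > 0` on `[0, π/2)` and `U' < 0` on `(π/2, π]`. -/
def IsOddZeroUpGroundState (κ : ℝ) (U : ℝ → ℝ) : Prop :=
  ContDiff ℝ 2 U ∧
  Function.Periodic U (2 * π) ∧
  (∀ x : ℝ, U (-x) = - U x) ∧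
  (∀ x : ℝ, κ ^ 2 * deriv (deriv U) x + U x - U x ^ 3 = 0) ∧
  (∀ x ∈ Set.Ico (0 : ℝ) (π / 2), 0 < deriv U x) ∧
  (∀ x ∈ Set.Ioc (π / 2) π, deriv U x < 0)

/-- The Allen–Cahn energy with diffusion coefficient `κ`. -/
def energy (κ : ℝ) (u : ℝ → ℝ) : ℝ :=
  ∫ x in (-π)..π, (κ ^ 2 / 2 * (deriv u x) ^ 2 + (1 - u x ^ 2) ^ 2 / 4)

/-- The `L²` norm over one period `(-π, π)`. -/
def L2norm (f : ℝ → ℝ) : ℝ := Real.sqrt (∫ x in (-π)..π, (f x) ^ 2)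

/-- The `H¹` norm over one period `(-π, π)`. -/
def H1norm (f : ℝ → ℝ) : ℝ := Real.sqrt (L2norm f ^ 2 + L2norm (deriv f) ^ 2)


/-!
Multiply the equation by `sin` and integrate over `(0, π)`: the Wronskian
`κ² (U' sin − U cos)` has derivative `(U³ + (κ² − 1) U) sin` and vanishes at both ends,
since `U(0) = U(π) = 0` by oddness and periodicity. A zero-up ground state is positive on
`(0, π)`, so for `κ ≥ 1` this integrand is positive there, a contradiction.
-/

theorem pos_of_mem_Ioo_of_deriv_pos_of_deriv_neg {U : ℝ → ℝ} {a b c : ℝ}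
    (hU : Continuous U) (ha : U a = 0) (hb : U b = 0)
    (hup : ∀ x ∈ Ioo a c, 0 < deriv U x) (hdn : ∀ x ∈ Ioo c b, deriv U x < 0) :
    ∀ x ∈ Ioo a b, 0 < U x := by
  intro x ⟨hax, hxb⟩
  rcases le_or_gt x c with hxc | hcx
  · have hmono : StrictMonoOn U (Icc a c) :=
      strictMonoOn_of_deriv_pos (convex_Icc a c) hU.continuousOn (by rwa [interior_Icc])
    simpa [ha] using hmono (left_mem_Icc.2 (hax.trans_le hxc).le) ⟨hax.le, hxc⟩ hax
  · have hanti : StrictAntiOn U (Icc c b) :=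
      strictAntiOn_of_deriv_neg (convex_Icc c b) hU.continuousOn (by rwa [interior_Icc])
    simpa [hb] using hanti ⟨hcx.le, hxb.le⟩ (right_mem_Icc.2 (hcx.trans hxb).le) hxb

theorem hasDerivAt_wronskian_sin {κ x : ℝ} {U : ℝ → ℝ}
    (hU : DifferentiableAt ℝ U x) (hU' : DifferentiableAt ℝ (deriv U) x)
    (hode : κ ^ 2 * deriv (deriv U) x + U x - U x ^ 3 = 0) :
    HasDerivAt (fun y => κ ^ 2 * (deriv U y * sin y - U y * cos y))
      ((U x ^ 3 + (κ ^ 2 - 1) * U x) * sin x) x := by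
  have h := ((hU'.hasDerivAt.mul (hasDerivAt_sin x)).sub
    (hU.hasDerivAt.mul (hasDerivAt_cos x))).const_mul (κ ^ 2)
  exact h.congr_deriv (by linear_combination sin x * hode)

namespace IsOddZeroUpGroundState

variable {κ : ℝ} {U : ℝ → ℝ}

theorem differentiable (hU : IsOddZeroUpGroundState κ U) : Differentiable ℝ U :=
  hU.1.differentiable two_ne_zero

theorem differentiable_deriv (hU : IsOddZeroUpGroundState κ U) :
    Differentiable ℝ (deriv U) :=
  (hU.1.iterate_deriv' 1 1).differentiable one_ne_zero

theorem map_zero (hU : IsOddZeroUpGroundState κ U) : U 0 = 0 := by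
  have h := hU.2.2.1 0
  rw [neg_zero] at h
  linarith

theorem map_pi (hU : IsOddZeroUpGroundState κ U) : U π = 0 := by
  have h := hU.2.1 (-π)
  rw [show -π + 2 * π = π by ring, hU.2.2.1 π] at h
  linarith

theorem pos_of_mem_Ioo (hU : IsOddZeroUpGroundState κ U) : ∀ x ∈ Ioo 0 π, 0 < U x :=
  pos_of_mem_Ioo_of_deriv_pos_of_deriv_neg (c := π / 2) hU.differentiable.continuous
    hU.map_zero hU.map_pi (fun x hx => hU.2.2.2.2.1 x (Ioo_subset_Ico_self hx))
    (fun x hx => hU.2.2.2.2.2 x (Ioo_subset_Ioc_self hx))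

theorem integral_mul_sin_eq_zero (hU : IsOddZeroUpGroundState κ U) :
    ∫ x in 0..π, (U x ^ 3 + (κ ^ 2 - 1) * U x) * sin x = 0 := by
  have hcont : Continuous U := hU.differentiable.continuous
  rw [intervalIntegral.integral_eq_sub_of_hasDerivAt
    (fun x _ => hasDerivAt_wronskian_sin (hU.differentiable x) (hU.differentiable_deriv x)
      (hU.2.2.2.1 x)) ((by fun_prop : Continuous _).intervalIntegrable _ _)]
  simp [hU.map_zero, hU.map_pi]

end IsOddZeroUpGroundState

theorem ground_state_exists_implies_kappa_lt_one_general (κ : ℝ)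
    (h : ∃ U : ℝ → ℝ, IsOddZeroUpGroundState κ U) :
    κ < 1 := by
  obtain ⟨U, hU⟩ := h
  by_contra! hκ
  have hpos : 0 < ∫ x in 0..π, (U x ^ 3 + (κ ^ 2 - 1) * U x) * sin x := by
    refine intervalIntegral.intervalIntegral_pos_of_pos_on ?_ (fun x hx => ?_) pi_pos
    · have hcont : Continuous U := hU.differentiable.continuous
      exact (by fun_prop : Continuous _).intervalIntegrable _ _
    · have hUx := hU.pos_of_mem_Ioo x hx
      have hsin := sin_pos_of_pos_of_lt_pi hx.1 hx.2
      have hκ2 : 0 ≤ κ ^ 2 - 1 := by nlinarith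
      positivity
  exact hpos.ne' hU.integral_mul_sin_eq_zero

/-- if an odd zero-up ground state for parameter `κ > 0` exists then `κ < 1`. -/
theorem ground_state_exists_implies_kappa_lt_one (κ : ℝ) (hκ : 0 < κ)
    (h : ∃ U : ℝ → ℝ, IsOddZeroUpGroundState κ U) :
    κ < 1 :=
  ground_state_exists_implies_kappa_lt_one_general κ h
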